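/- arXiv:2102.10937 — 3 statements merged into one kernel-verified Lean document; each statement's English description precedes it below -/
import Mathlib

section
/- Let L be a locally compact Hausdorff space, {K_1, ..., K_M} a family of pairwise disjoint nonempty compact subsets of L, and K ⊆ L a compact set containing all K_m. If {U_1, ..., U_R} is a family of relatively compact open subsets of L covering K such that for each m there is r(m) with K_m ⊆ U_{r(m)}, then there exists a finite family of open sets {Z_1, ..., Z_S} with M ≤ S ≤ R + M, each contained in some U_r, covering K, such that Z_1, ..., Z_M are pairwise disjoint, K_m ⊆ Z_m and K_m ∩ Z_s = ∅ for all s ≠ m (1 ≤ m ≤ M), and for each s_0 > M there exists a point z_{s_0} ∈ Z_{s_0} not belonging to any Z_s with s ≠ s_0. -/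
/-- Refinement lemma: given pairwise disjoint compacts `K m` inside a compact `Kc`, and a
cover of `Kc` by relatively compact open sets `U r` with each `K m` inside some `U (r m)`,
there is an open refinement `Z` of size `S` with `M ≤ S ≤ R + M`, whose first `M` members
are pairwise disjoint and isolate the `K m`, and such that every later member contains a
point belonging to no other member. -/
theorem open_refinement_lemma {L : Type*} [TopologicalSpace L] [T2Space L]
    [LocallyCompactSpace L] {M R : ℕ}
    (K : Fin M → Set L) (hKcpt : ∀ m, IsCompact (K m)) (hKne : ∀ m, (K m).Nonempty)
    (hKdisj : ∀ m m', m ≠ m' → Disjoint (K m) (K m'))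
    (Kc : Set L) (hKc : IsCompact Kc) (hKsub : ∀ m, K m ⊆ Kc)
    (U : Fin R → Set L) (hUopen : ∀ r, IsOpen (U r))
    (hUrc : ∀ r, IsCompact (closure (U r)))
    (hUcover : Kc ⊆ ⋃ r, U r)
    (ρ : Fin M → Fin R) (hρ : ∀ m, K m ⊆ U (ρ m)) :
    ∃ (S : ℕ) (hMS : M ≤ S), S ≤ R + M ∧ ∃ Z : Fin S → Set L,
      (∀ s, IsOpen (Z s)) ∧
      (∀ s, ∃ r, Z s ⊆ U r) ∧
      Kc ⊆ ⋃ s, Z s ∧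
      (∀ m m' : Fin M, m ≠ m' →
        Disjoint (Z (Fin.castLE hMS m)) (Z (Fin.castLE hMS m'))) ∧
      (∀ m : Fin M, K m ⊆ Z (Fin.castLE hMS m)) ∧
      (∀ m : Fin M, ∀ s : Fin S, s ≠ Fin.castLE hMS m → K m ∩ Z s = ∅) ∧
      (∀ s₀ : Fin S, M ≤ (s₀ : ℕ) →
        ∃ z ∈ Z s₀, ∀ s : Fin S, s ≠ s₀ → z ∉ Z s) := by
  classical
  -- Step 1: separate each `K m` from the union of the others
  have sep : ∀ m : Fin M, ∃ V₀ W₀ : Set L, IsOpen V₀ ∧ IsOpen W₀ ∧ K m ⊆ V₀ ∧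
      (⋃ (m' : Fin M) (_ : m' ≠ m), K m') ⊆ W₀ ∧ Disjoint V₀ W₀ := by
    intro m
    have hA : IsCompact (⋃ (m' : Fin M) (_ : m' ≠ m), K m') := by
      apply isCompact_iUnion
      intro m'
      by_cases h : m' ≠ m
      · simpa [h] using hKcpt m'
      · simp [h]
    have hdisj : Disjoint (K m) (⋃ (m' : Fin M) (_ : m' ≠ m), K m') := by
      rw [Set.disjoint_iUnion₂_right]
      intro m' h
      exact hKdisj m m' (Ne.symm h)
    obtain ⟨V₀, W₀, hV₀, hW₀, hsub, hsub', hd⟩ :=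
      SeparatedNhds.of_isCompact_isCompact (hKcpt m) hA hdisj
    exact ⟨V₀, W₀, hV₀, hW₀, hsub, hsub', hd⟩
  choose V₀ W₀ hV₀open hW₀open hKV₀ hAW₀ hVW using sep
  -- the disjoint open neighborhoods
  set V : Fin M → Set L := fun m => U (ρ m) ∩ V₀ m ∩ ⋂ (m' : Fin M) (_ : m' ≠ m), W₀ m'
    with hVdef
  have hVopen : ∀ m, IsOpen (V m) := by
    intro m
    apply IsOpen.inter (IsOpen.inter (hUopen _) (hV₀open m))
    exact isOpen_iInter_of_finite fun m' => isOpen_iInter_of_finite fun _ => hW₀open m'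
  have hKV : ∀ m, K m ⊆ V m := by
    intro m x hx
    refine ⟨⟨hρ m hx, hKV₀ m hx⟩, ?_⟩
    simp only [Set.mem_iInter]
    intro m' h
    exact hAW₀ m' (Set.mem_iUnion₂.2 ⟨m, Ne.symm h, hx⟩)
  have hVdisj : ∀ m m', m ≠ m' → Disjoint (V m) (V m') := by
    intro m m' h
    have h1 : V m ⊆ V₀ m := fun x hx => hx.1.2
    have h2 : V m' ⊆ W₀ m := by
      intro x hx
      have := hx.2
      simp only [Set.mem_iInter] at this
      exact this m h
    exact (hVW m).mono h1 h2
  -- Step 2: the complement sets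
  have hKclosed : IsClosed (⋃ m, K m) :=
    isClosed_iUnion_of_finite fun m => (hKcpt m).isClosed
  set Z' : Fin R → Set L := fun r => U r \ ⋃ m, K m with hZ'def
  have hZ'open : ∀ r, IsOpen (Z' r) := fun r => (hUopen r).sdiff hKclosed
  -- Step 3: minimal covering subfamily
  set P : Finset (Fin R) → Prop := fun T => Kc ⊆ (⋃ m, V m) ∪ ⋃ r ∈ T, Z' r with hPdef
  have hPuniv : P Finset.univ := by
    intro x hx
    by_cases hxK : x ∈ ⋃ m, K m
    · obtain ⟨m, hm⟩ := Set.mem_iUnion.1 hxK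
      exact Or.inl (Set.mem_iUnion.2 ⟨m, hKV m hm⟩)
    · obtain ⟨r, hr⟩ := Set.mem_iUnion.1 (hUcover hx)
      exact Or.inr (Set.mem_biUnion (Finset.mem_univ r) ⟨hr, hxK⟩)
  obtain ⟨T, hTmem, hTmin⟩ := Finset.exists_min_image
    ((Finset.univ : Finset (Finset (Fin R))).filter P) Finset.card
    ⟨Finset.univ, Finset.mem_filter.2 ⟨Finset.mem_univ _, hPuniv⟩⟩
  have hT : P T := (Finset.mem_filter.1 hTmem).2
  have hTmin' : ∀ T' : Finset (Fin R), P T' → T.card ≤ T'.card := fun T' hT' =>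
    hTmin T' (Finset.mem_filter.2 ⟨Finset.mem_univ _, hT'⟩)
  -- Step 4: assemble
  refine ⟨M + T.card, Nat.le_add_right _ _, ?_, ?_⟩
  · have : T.card ≤ R := by simpa using T.card_le_univ
    omega
  set e : Fin T.card ≃o {x // x ∈ T} := T.orderIsoOfFin rfl with hedef
  set S := M + T.card with hSdef
  set Z : Fin S → Set L := fun s =>
    if h : (s : ℕ) < M then V ⟨s, h⟩
    else Z' (e ⟨(s : ℕ) - M, by have := s.2; omega⟩) with hZdef
  have hZlt : ∀ m : Fin M, Z (Fin.castLE (Nat.le_add_right M T.card) m) = V m := by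
    intro m
    simp only [hZdef, Fin.coe_castLE, m.isLt, dif_pos, Fin.eta]
  have hZge : ∀ (s : Fin S) (h : ¬ (s : ℕ) < M),
      Z s = Z' (e ⟨(s : ℕ) - M, by have := s.2; omega⟩) := by
    intro s h
    simp only [hZdef, h, dif_neg, not_false_iff]
  refine ⟨Z, ?_, ?_, ?_, ?_, ?_, ?_, ?_⟩
  · -- open
    intro s
    by_cases h : (s : ℕ) < M
    · rw [hZdef]; simp only [h, dif_pos]; exact hVopen _
    · rw [hZge s h]; exact hZ'open _
  · -- refinement
    intro s
    by_cases h : (s : ℕ) < M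
    · refine ⟨ρ ⟨s, h⟩, ?_⟩
      rw [hZdef]; simp only [h, dif_pos]
      exact fun x hx => hx.1.1
    · exact ⟨_, by rw [hZge s h]; exact Set.diff_subset⟩
  · -- cover
    intro x hx
    rcases hT hx with hx' | hx'
    · obtain ⟨m, hm⟩ := Set.mem_iUnion.1 hx'
      refine Set.mem_iUnion.2 ⟨Fin.castLE (Nat.le_add_right M T.card) m, ?_⟩
      rw [hZlt m]; exact hm
    · obtain ⟨r, hrT, hxr⟩ := Set.mem_iUnion₂.1 hx'
      set i : Fin T.card := e.symm ⟨r, hrT⟩ with hidef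
      refine Set.mem_iUnion.2 ⟨⟨M + (i : ℕ), by have := i.2; omega⟩, ?_⟩
      have hnlt : ¬ (M + (i : ℕ) < M) := by omega
      rw [hZge _ hnlt]
      have : (⟨M + (i : ℕ) - M, by have := i.2; omega⟩ : Fin T.card) = i := by
        apply Fin.ext; simp
      rw [this, hidef]
      simpa using hxr
  · -- disjointness of the first M
    intro m m' h
    rw [hZlt m, hZlt m']
    exact hVdisj m m' h
  · -- K m ⊆ Z m
    intro m
    rw [hZlt m]
    exact hKV m
  · -- K m ∩ Z s = ∅ for s ≠ m
    intro m s hs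
    by_cases h : (s : ℕ) < M
    · rw [hZdef]; simp only [h, dif_pos]
      have hne : (⟨(s : ℕ), h⟩ : Fin M) ≠ m := by
        intro hc
        apply hs
        apply Fin.ext
        simpa using congrArg Fin.val hc
      exact Set.disjoint_iff_inter_eq_empty.1
        (((hVdisj m _ (Ne.symm hne)).mono_left (hKV m)).symm.symm)
    · rw [hZge s h]
      ext x
      simp only [Set.mem_inter_iff, Set.mem_empty_iff_false, iff_false, not_and]
      intro hxm hxZ
      exact hxZ.2 (Set.mem_iUnion.2 ⟨m, hxm⟩)
  · -- private points
    intro s₀ hs₀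
    have hnlt : ¬ ((s₀ : ℕ) < M) := by omega
    set i : Fin T.card := ⟨(s₀ : ℕ) - M, by have := s₀.2; omega⟩ with hidef
    set r : Fin R := (e i).1 with hrdef
    have hrT : r ∈ T := (e i).2
    have hnotP : ¬ P (T.erase r) := by
      intro hc
      have h1 := hTmin' _ hc
      have h2 := T.card_erase_of_mem hrT
      have h3 : 0 < T.card := Finset.card_pos.2 ⟨r, hrT⟩
      omega
    rw [hPdef] at hnotP
    simp only [Set.not_subset] at hnotP
    obtain ⟨x, hxKc, hxnot⟩ := hnotP
    simp only [Set.mem_union, not_or, Set.mem_iUnion, not_exists] at hxnot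
    obtain ⟨hxV, hxZ'⟩ := hxnot
    -- x ∈ Z' r
    have hxr : x ∈ Z' r := by
      rcases hT hxKc with h' | h'
      · exact absurd (Set.mem_iUnion.1 h') (by simpa using hxV)
      · obtain ⟨r', hr'T, hxr'⟩ := Set.mem_iUnion₂.1 h'
        by_cases hrr : r' = r
        · exact hrr ▸ hxr'
        · exact absurd hxr' (by
            have : r' ∈ T.erase r := Finset.mem_erase.2 ⟨hrr, hr'T⟩
            have := hxZ' r'
            exact this ‹r' ∈ T.erase r›)
    refine ⟨x, ?_, ?_⟩
    · rw [hZge s₀ hnlt]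
      convert hxr using 2
    · intro s hss
      by_cases h : (s : ℕ) < M
      · rw [hZdef]; simp only [h, dif_pos]
        exact hxV _
      · rw [hZge s h]
        set j : Fin T.card := ⟨(s : ℕ) - M, by have := s.2; omega⟩ with hjdef
        have hji : j ≠ i := by
          intro hc
          apply hss
          apply Fin.ext
          have := congrArg Fin.val hc
          simp only [hjdef, hidef] at this
          omega
        have hne : ((e j : {x // x ∈ T}) : Fin R) ≠ r := by
          intro hc
          exact hji (e.injective (Subtype.ext hc))
        have hmem : ((e j : {x // x ∈ T}) : Fin R) ∈ T.erase r :=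
          Finset.mem_erase.2 ⟨hne, (e j).2⟩
        have := hxZ' ((e j : {x // x ∈ T}) : Fin R)
        exact this hmem
end

section
/- Let L be a compact Hausdorff space, {K_1, ..., K_M} pairwise disjoint nonempty compact subsets of L, and {Z_1, ..., Z_S} an open cover of L such that Z_1, ..., Z_M are pairwise disjoint, K_m ⊆ Z_m, K_m ∩ Z_s = ∅ for s ≠ m, and for each s_0 > M there exists z_{s_0} ∈ Z_{s_0} \ ⋃_{s≠s_0} Z_s. Then there exist continuous functions φ_1, ..., φ_S : L → [0,1] with Σ_s φ_s ≡ 1 on L, supp(φ_s) ⊆ Z_s for all s, φ_1, ..., φ_M having pairwise disjoint supports, φ_m ≡ 1 on K_m for m = 1, ..., M, and for each s > M a point z_s ∈ Z_s with φ_s(z_s) = 1. -/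
/-- Existence of a partition of unity with special properties on a compact space,
subordinated to an open cover `Z` whose first `M` members are pairwise disjoint and
isolate the pairwise disjoint compacts `K m`. -/
theorem partition_of_unity_compact {L : Type*} [TopologicalSpace L] [CompactSpace L]
    [T2Space L] {M S : ℕ} (hMS : M ≤ S)
    (K : Fin M → Set L) (hKcpt : ∀ m, IsCompact (K m)) (hKne : ∀ m, (K m).Nonempty)
    (hKdisj : ∀ m m', m ≠ m' → Disjoint (K m) (K m'))
    (Z : Fin S → Set L) (hZopen : ∀ s, IsOpen (Z s))
    (hZcover : (Set.univ : Set L) ⊆ ⋃ s, Z s)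
    (hZdisj : ∀ m m' : Fin M, m ≠ m' →
      Disjoint (Z (Fin.castLE hMS m)) (Z (Fin.castLE hMS m')))
    (hKZ : ∀ m : Fin M, K m ⊆ Z (Fin.castLE hMS m))
    (hKZ' : ∀ m : Fin M, ∀ s : Fin S, s ≠ Fin.castLE hMS m → K m ∩ Z s = ∅)
    (hpt : ∀ s₀ : Fin S, M ≤ (s₀ : ℕ) →
      ∃ z ∈ Z s₀, ∀ s : Fin S, s ≠ s₀ → z ∉ Z s) :
    ∃ φ : Fin S → C(L, ℝ),
      (∀ s x, φ s x ∈ Set.Icc (0 : ℝ) 1) ∧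
      (∀ x, ∑ s, φ s x = 1) ∧
      (∀ s, tsupport (fun x => φ s x) ⊆ Z s) ∧
      (∀ m m' : Fin M, m ≠ m' →
        Disjoint (tsupport fun x => φ (Fin.castLE hMS m) x)
          (tsupport fun x => φ (Fin.castLE hMS m') x)) ∧
      (∀ m : Fin M, ∀ x ∈ K m, φ (Fin.castLE hMS m) x = 1) ∧
      (∀ s : Fin S, M ≤ (s : ℕ) → ∃ z ∈ Z s, φ s z = 1) := by
  obtain ⟨f, hf⟩ := PartitionOfUnity.exists_isSubordinate (s := (Set.univ : Set L))
    isClosed_univ Z hZopen (by simpa using hZcover)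
  have hsum : ∀ x : L, ∑ s, f s x = 1 := fun x => by
    rw [← finsum_eq_sum_of_fintype]; exact f.sum_eq_one (Set.mem_univ x)
  have hzero : ∀ (s : Fin S) (x : L), x ∉ Z s → f s x = 0 := fun s x hx => by
    by_contra h
    exact hx (hf s (subset_closure h))
  refine ⟨fun s => f s, ?_, hsum, hf, ?_, ?_, ?_⟩
  · intro s x
    refine ⟨f.nonneg s x, ?_⟩
    calc f s x ≤ ∑ t, f t x :=
        Finset.single_le_sum (fun t _ => f.nonneg t x) (Finset.mem_univ s)
      _ = 1 := hsum x
  · intro m m' hmm'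
    exact (hZdisj m m' hmm').mono (hf _) (hf _)
  · intro m x hx
    have h : ∑ s, f s x = f (Fin.castLE hMS m) x := by
      refine Finset.sum_eq_single _ (fun s _ hs => hzero s x fun hxZ => ?_)
        (fun h => absurd (Finset.mem_univ _) h)
      have : x ∈ K m ∩ Z s := ⟨hx, hxZ⟩
      rw [hKZ' m s hs] at this
      exact this
    rw [← h, hsum x]
  · intro s₀ hs₀
    obtain ⟨z, hz, hz'⟩ := hpt s₀ hs₀
    refine ⟨z, hz, ?_⟩
    have h : ∑ s, f s z = f s₀ z := by
      refine Finset.sum_eq_single _ (fun s _ hs => hzero s z (hz' s hs))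
        (fun h => absurd (Finset.mem_univ _) h)
    rw [show (f s₀ z : ℝ) = ∑ s, f s z from h.symm, hsum z]
end

section
/- Let X be a Banach space, P : X → X a norm-one projection, i : P(X) → X the inclusion, and P̃ : X → P(X) the astriction of P (so P = i ∘ P̃ and P̃ ∘ i = Id). If T ∈ L(X) has numerical radius ν(T) ≤ 1, then the operator T_1 := P̃ ∘ T ∘ i on P(X) satisfies ν(T_1) ≤ 1. -/
/-- The numerical radius of an operator. -/
noncomputable def numRadius {E : Type*} [NormedAddCommGroup E] [NormedSpace ℝ E]
    (T : E →L[ℝ] E) : ℝ :=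
  sSup {r : ℝ | ∃ (x : E) (f : E →L[ℝ] ℝ),
    ‖x‖ = 1 ∧ ‖f‖ = 1 ∧ f x = 1 ∧ r = ‖f (T x)‖}

/-- If `P` is a norm-one projection on `X` and `T` has numerical radius at most one, then
the compression `P̃ ∘ T ∘ i` of `T` to the range of `P` has numerical radius at most
one. -/
theorem numRadius_compression_le {X : Type*} [NormedAddCommGroup X] [NormedSpace ℝ X]
    [CompleteSpace X] (P : X →L[ℝ] X) (hP : P.comp P = P) (hPn : ‖P‖ = 1)
    (T : X →L[ℝ] X) (hT : numRadius T ≤ 1) :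
    numRadius ((P.codRestrict (LinearMap.range (P : X →ₗ[ℝ] X))
        (fun x => LinearMap.mem_range_self (P : X →ₗ[ℝ] X) x)).comp
      (T.comp (LinearMap.range (P : X →ₗ[ℝ] X)).subtypeL)) ≤ 1 := by
  have hbdd : BddAbove {r : ℝ | ∃ (x : X) (f : X →L[ℝ] ℝ),
      ‖x‖ = 1 ∧ ‖f‖ = 1 ∧ f x = 1 ∧ r = ‖f (T x)‖} := by
    refine ⟨‖T‖, ?_⟩
    rintro r ⟨x, f, hx, hf, hfx, rfl⟩
    calc ‖f (T x)‖ ≤ ‖f‖ * ‖T x‖ := f.le_opNorm _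
      _ ≤ 1 * (‖T‖ * ‖x‖) := by
          rw [hf]; exact mul_le_mul_of_nonneg_left (T.le_opNorm x) zero_le_one
      _ = ‖T‖ := by rw [hx]; ring
  apply Real.sSup_le _ zero_le_one
  rintro r ⟨q, g, hq, hg, hgq, rfl⟩
  set Pt : X →L[ℝ] ↥(LinearMap.range (P : X →ₗ[ℝ] X)) :=
    P.codRestrict (LinearMap.range (P : X →ₗ[ℝ] X))
      (fun x => LinearMap.mem_range_self (P : X →ₗ[ℝ] X) x) with hPt
  have hPq : P (q : X) = (q : X) := by
    obtain ⟨y, hy⟩ := q.2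
    have : P (P y) = P y := by
      have := congrArg (fun S : X →L[ℝ] X => S y) hP
      simpa using this
    rw [← hy]; simpa using this
  set f : X →L[ℝ] ℝ := g.comp Pt with hf
  have hfle : ‖f‖ ≤ 1 := by
    refine ContinuousLinearMap.opNorm_le_bound _ zero_le_one (fun x => ?_)
    have h1 : ‖f x‖ ≤ ‖g‖ * ‖Pt x‖ := g.le_opNorm _
    have h2 : ‖Pt x‖ = ‖P x‖ := rfl
    have h3 : ‖P x‖ ≤ ‖P‖ * ‖x‖ := P.le_opNorm x
    calc ‖f x‖ ≤ ‖g‖ * ‖P x‖ := by rw [← h2]; exact h1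
      _ ≤ 1 * (1 * ‖x‖) := by
          rw [hg]; exact mul_le_mul_of_nonneg_left (by rw [← hPn]; exact h3) zero_le_one
      _ = 1 * ‖x‖ := by ring
  have hPtq : Pt (q : X) = q := by
    apply Subtype.ext
    simpa [Pt] using hPq
  have hfq : f (q : X) = 1 := by
    rw [hf, ContinuousLinearMap.comp_apply, hPtq, hgq]
  have hfn : ‖f‖ = 1 := by
    refine le_antisymm hfle ?_
    have : (1 : ℝ) = ‖f (q : X)‖ := by rw [hfq]; simp
    calc (1 : ℝ) = ‖f (q : X)‖ := this
      _ ≤ ‖f‖ * ‖(q : X)‖ := f.le_opNorm _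
      _ = ‖f‖ := by rw [show ‖(q : X)‖ = 1 from hq]; ring
  have hrval : ‖g (((Pt.comp (T.comp (LinearMap.range (P : X →ₗ[ℝ] X)).subtypeL))) q)‖
      = ‖f (T (q : X))‖ := rfl
  have hmem : ‖f (T (q : X))‖ ∈ {r : ℝ | ∃ (x : X) (φ : X →L[ℝ] ℝ),
      ‖x‖ = 1 ∧ ‖φ‖ = 1 ∧ φ x = 1 ∧ r = ‖φ (T x)‖} :=
    ⟨(q : X), f, hq, hfn, hfq, rfl⟩
  calc ‖g (((Pt.comp (T.comp (LinearMap.range (P : X →ₗ[ℝ] X)).subtypeL))) q)‖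
      = ‖f (T (q : X))‖ := hrval
    _ ≤ numRadius T := le_csSup hbdd hmem
    _ ≤ 1 := hT
end
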